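/- Let G be a connected simple graph with maximum degree at most 4 and suppose there is a list assignment L with |L(e)| ≥ 22 for every edge e such that G is not strongly L-edge-colorable but every proper subgraph of G is strongly L-edge-colorable (restricting L to its edges). Then G is 4-regular. -/

import Mathlib

/-- Two edges are "close" (distance at most 1): some endpoint of one equals,
or is adjacent to, some endpoint of the other. In a strong edge-coloring,
distinct close edges must get distinct colors. -/
def EdgeClose {V : Type*} (G : SimpleGraph V) (e₁ e₂ : Sym2 V) : Prop :=
  ∃ u w, u ∈ e₁ ∧ w ∈ e₂ ∧ (u = w ∨ G.Adj u w)

/-- `c` is a strong edge-coloring of `G` (viewed as a function on all of `Sym2 V`,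
only its values on edges of `G` matter). -/
def IsStrongEdgeColoringOn {V : Type*} (G : SimpleGraph V) (c : Sym2 V → ℕ) : Prop :=
  ∀ e₁ ∈ G.edgeSet, ∀ e₂ ∈ G.edgeSet, e₁ ≠ e₂ → EdgeClose G e₁ e₂ → c e₁ ≠ c e₂

/-- `G` is strongly `L`-edge-colorable. -/
def StronglyLColorable {V : Type*} (G : SimpleGraph V) (L : Sym2 V → Finset ℕ) : Prop :=
  ∃ c : Sym2 V → ℕ, IsStrongEdgeColoringOn G c ∧ ∀ e ∈ G.edgeSet, c e ∈ L e

/-- `G` is strongly `k`-edge-choosable. -/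
def StronglyEdgeChoosable {V : Type*} (G : SimpleGraph V) (k : ℕ) : Prop :=
  ∀ L : Sym2 V → Finset ℕ, (∀ e ∈ G.edgeSet, k ≤ (L e).card) → StronglyLColorable G L

/-!
If a vertex `v` had degree at most 3, minimality colors `G` with the edges at `v` deleted; since
the remaining edges avoid `v`, closeness between them does not use the deleted edges, so this is a
partial strong coloring of `G`. An edge `vy` is close to at most `(3 + 4 - 2) * 4 = 20` other
edges, so the edges at `v` can be colored greedily from lists of size 22, a contradiction.
(`v` does have an edge: `G` is connected and, not being colorable, not edgeless.)
-/

open Finset SimpleGraph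

namespace EdgeClose

variable {V : Type*} {G : SimpleGraph V}

lemma symm {e f : Sym2 V} (h : EdgeClose G e f) : EdgeClose G f e := by
  obtain ⟨u, w, hu, hw, h⟩ := h
  exact ⟨w, u, hw, hu, h.imp Eq.symm SimpleGraph.Adj.symm⟩

lemma deleteIncidenceSet {v : V} {e f : Sym2 V} (he : v ∉ e) (hf : v ∉ f)
    (h : EdgeClose G e f) : EdgeClose (G.deleteIncidenceSet v) e f := by
  obtain ⟨u, w, hu, hw, h⟩ := h
  refine ⟨u, w, hu, hw, h.imp id fun huw => ?_⟩
  exact deleteIncidenceSet_adj.mpr ⟨huw, ne_of_mem_of_not_mem hu he, ne_of_mem_of_not_mem hw hf⟩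

lemma exists_mem_neighbor {u w : V} {f : Sym2 V} (hf : f ∈ G.edgeSet) (hne : f ≠ s(u, w))
    (h : EdgeClose G s(u, w) f) : ∃ y ∈ f, (G.Adj u y ∧ y ≠ w) ∨ (G.Adj w y ∧ y ≠ u) := by
  obtain ⟨p, q, hp, hq, hpq⟩ := h
  obtain ⟨r, rfl⟩ := Sym2.mem_iff_exists.mp hq
  have hqr : G.Adj q r := hf
  rw [Sym2.mem_iff] at hp
  by_cases hqu : q = u
  · subst hqu
    exact ⟨r, Sym2.mem_mk_right q r, Or.inl ⟨hqr, by rintro rfl; exact hne rfl⟩⟩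
  by_cases hqw : q = w
  · subst hqw
    exact ⟨r, Sym2.mem_mk_right q r, Or.inr ⟨hqr, by rintro rfl; exact hne Sym2.eq_swap⟩⟩
  have hadj : G.Adj p q := hpq.resolve_left fun hpq => by
    rcases hp with rfl | rfl
    exacts [hqu hpq.symm, hqw hpq.symm]
  refine ⟨q, Sym2.mem_mk_left q r, ?_⟩
  rcases hp with rfl | rfl
  exacts [Or.inl ⟨hadj, hqw⟩, Or.inr ⟨hadj, hqu⟩]

end EdgeClose

namespace SimpleGraph

variable {V : Type*} (G : SimpleGraph V)

lemma deleteIncidenceSet_lt {v x : V} (hvx : G.Adj v x) : G.deleteIncidenceSet v < G := by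
  refine (G.deleteIncidenceSet_le v).lt_of_ne fun h => ?_
  have : (G.deleteIncidenceSet v).Adj v x := by rw [h]; exact hvx
  exact (deleteIncidenceSet_adj.mp this).2.1 rfl

noncomputable def closeEdgeFinset [Fintype V] (e : Sym2 V) : Finset (Sym2 V) := by
  classical exact {f | f ∈ G.edgeSet ∧ f ≠ e ∧ EdgeClose G e f}

variable {G}

lemma mem_closeEdgeFinset [Fintype V] {e f : Sym2 V} :
    f ∈ G.closeEdgeFinset e ↔ f ∈ G.edgeSet ∧ f ≠ e ∧ EdgeClose G e f := by
  classical
  simp [closeEdgeFinset]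

/-- Each edge close to `s(u, w)` contains one of the `deg u + deg w - 2` further neighbours of
`u` and `w`, and each of these lies on at most `Δ` edges. -/
lemma card_closeEdgeFinset_le [Fintype V] [DecidableRel G.Adj] {Δ : ℕ}
    (hΔ : ∀ y, G.degree y ≤ Δ) {u w : V} (huw : G.Adj u w) :
    #(G.closeEdgeFinset s(u, w)) ≤ (G.degree u + G.degree w - 2) * Δ := by
  classical
  set N := (G.neighborFinset u).erase w ∪ (G.neighborFinset w).erase u
  have hsub : G.closeEdgeFinset s(u, w) ⊆ N.biUnion (G.incidenceFinset ·) := by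
    intro f hf
    obtain ⟨hfG, hne, hclose⟩ := mem_closeEdgeFinset.mp hf
    obtain ⟨y, hyf, hy⟩ := hclose.exists_mem_neighbor hfG hne
    refine mem_biUnion.mpr ⟨y, ?_, (G.mem_incidenceFinset y f).mpr ⟨hfG, hyf⟩⟩
    simp only [N, mem_union, mem_erase, mem_neighborFinset]
    tauto
  have hN : #N ≤ G.degree u + G.degree w - 2 := by
    have hu := card_erase_of_mem ((G.mem_neighborFinset u w).mpr huw)
    have hw := card_erase_of_mem ((G.mem_neighborFinset w u).mpr huw.symm)
    have : #N ≤ #((G.neighborFinset u).erase w) + #((G.neighborFinset w).erase u) :=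
      card_union_le _ _
    rw [card_neighborFinset_eq_degree] at hu hw
    have := huw.degree_pos_left
    have := huw.degree_pos_right
    omega
  calc _ ≤ #(N.biUnion (G.incidenceFinset ·)) := card_le_card hsub
    _ ≤ #N * Δ := card_biUnion_le_card_mul _ _ _ fun y _ => by
        rw [card_incidenceFinset_eq_degree]; exact hΔ y
    _ ≤ _ := Nat.mul_le_mul_right Δ hN

end SimpleGraph

section Greedy

variable {V : Type*} {G : SimpleGraph V} {L : Sym2 V → Finset ℕ}

def IsPartialStrongLColoring (G : SimpleGraph V) (L : Sym2 V → Finset ℕ) (S : Set (Sym2 V))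
    (c : Sym2 V → ℕ) : Prop :=
  (∀ e₁ ∈ S, ∀ e₂ ∈ S, e₁ ≠ e₂ → EdgeClose G e₁ e₂ → c e₁ ≠ c e₂) ∧ ∀ e ∈ S, c e ∈ L e

lemma stronglyLColorable_bot (L : Sym2 V → Finset ℕ) : StronglyLColorable (⊥ : SimpleGraph V) L :=
  ⟨0, fun e he => by simp at he, fun e he => by simp at he⟩

lemma IsPartialStrongLColoring.stronglyLColorable {S : Set (Sym2 V)} {c : Sym2 V → ℕ}
    (hc : IsPartialStrongLColoring G L S c) (hS : G.edgeSet ⊆ S) : StronglyLColorable G L :=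
  ⟨c, fun e₁ h₁ e₂ h₂ => hc.1 e₁ (hS h₁) e₂ (hS h₂), fun e he => hc.2 e (hS he)⟩

lemma isPartialStrongLColoring_of_deleteIncidenceSet {v : V} {c : Sym2 V → ℕ}
    (hc : IsStrongEdgeColoringOn (G.deleteIncidenceSet v) c)
    (hcL : ∀ e ∈ (G.deleteIncidenceSet v).edgeSet, c e ∈ L e) :
    IsPartialStrongLColoring G L (G.deleteIncidenceSet v).edgeSet c := by
  have hv : ∀ e ∈ (G.deleteIncidenceSet v).edgeSet, v ∉ e := fun e he hve => by
    rw [edgeSet_deleteIncidenceSet] at he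
    exact he.2 ⟨he.1, hve⟩
  exact ⟨fun e₁ h₁ e₂ h₂ hne hclose =>
    hc e₁ h₁ e₂ h₂ hne (hclose.deleteIncidenceSet (hv e₁ h₁) (hv e₂ h₂)), hcL⟩

variable [Fintype V]

lemma IsPartialStrongLColoring.exists_insert {S : Set (Sym2 V)} {c : Sym2 V → ℕ}
    (hc : IsPartialStrongLColoring G L S c) (hS : S ⊆ G.edgeSet) {e : Sym2 V}
    (he : #(G.closeEdgeFinset e) < #(L e)) :
    ∃ c', IsPartialStrongLColoring G L (insert e S) c' := by
  classical
  obtain ⟨col, hcolL, hcol⟩ : ∃ col ∈ L e, col ∉ (G.closeEdgeFinset e).image c := by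
    by_contra! h
    exact (card_le_card h).trans card_image_le |>.not_gt he
  have hfree : ∀ f ∈ S, f ≠ e → EdgeClose G e f → c f ≠ col := fun f hf hne hclose h =>
    hcol (mem_image.mpr ⟨f, mem_closeEdgeFinset.mpr ⟨hS hf, hne, hclose⟩, h⟩)
  refine ⟨Function.update c e col, fun e₁ h₁ e₂ h₂ hne hclose => ?_, fun f hf => ?_⟩
  · rcases eq_or_ne e₁ e with h₁e | h₁e <;> rcases eq_or_ne e₂ e with h₂e | h₂e
    · exact absurd (h₁e.trans h₂e.symm) hne
    · rw [h₁e] at hclose ⊢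
      rw [Function.update_self, Function.update_of_ne h₂e]
      exact (hfree e₂ (h₂.resolve_left h₂e) h₂e hclose).symm
    · rw [h₂e] at hclose ⊢
      rw [Function.update_self, Function.update_of_ne h₁e]
      exact hfree e₁ (h₁.resolve_left h₁e) h₁e hclose.symm
    · rw [Function.update_of_ne h₁e, Function.update_of_ne h₂e]
      exact hc.1 e₁ (h₁.resolve_left h₁e) e₂ (h₂.resolve_left h₂e) hne hclose
  · rcases eq_or_ne f e with rfl | hfe
    · rwa [Function.update_self]
    · rw [Function.update_of_ne hfe]
      exact hc.2 f (hf.resolve_left hfe)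

lemma IsPartialStrongLColoring.exists_union {S : Set (Sym2 V)} {c : Sym2 V → ℕ}
    (hc : IsPartialStrongLColoring G L S c) (hS : S ⊆ G.edgeSet) (T : Finset (Sym2 V))
    (hT : ↑T ⊆ G.edgeSet) (hTL : ∀ e ∈ T, #(G.closeEdgeFinset e) < #(L e)) :
    ∃ c', IsPartialStrongLColoring G L (S ∪ ↑T) c' := by
  classical
  induction T using Finset.induction_on with
  | empty => exact ⟨c, by simpa using hc⟩
  | insert a T _ ih =>
    rw [coe_insert, Set.insert_subset_iff] at hT
    obtain ⟨c', hc'⟩ := ih hT.2 fun e he => hTL e (mem_insert_of_mem he)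
    rw [coe_insert, Set.union_insert]
    exact hc'.exists_insert (Set.union_subset hS hT.2) (hTL a (mem_insert_self a T))

end Greedy

/-- A minimal counterexample (for lists of size 22) among connected simple
graphs with maximum degree at most 4 is 4-regular. -/
theorem minimal_counterexample_four_regular
    {V : Type*} [Fintype V] (G : SimpleGraph V) [DecidableRel G.Adj]
    (hconn : G.Connected) (hΔ : ∀ u, G.degree u ≤ 4)
    (L : Sym2 V → Finset ℕ) (hL : ∀ e ∈ G.edgeSet, 22 ≤ (L e).card)
    (hG : ¬ StronglyLColorable G L)
    (hmin : ∀ H : SimpleGraph V, H < G → StronglyLColorable H L) :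
    ∀ v, G.degree v = 4 := by
  classical
  intro v
  by_contra hv
  have hdv : G.degree v ≤ 3 := by have := hΔ v; omega
  have : Nontrivial V := by
    have hne : G ≠ ⊥ := by rintro rfl; exact hG (stronglyLColorable_bot L)
    obtain ⟨a, b, hab⟩ := ne_bot_iff_exists_adj.mp hne
    exact ⟨a, b, hab.ne⟩
  obtain ⟨x, hvx⟩ := G.degree_pos_iff_exists_adj v |>.mp
    (hconn.preconnected.degree_pos_of_nontrivial v)
  obtain ⟨c, hc, hcL⟩ := hmin _ (G.deleteIncidenceSet_lt hvx)
  have hcloseL : ∀ e ∈ G.incidenceFinset v, #(G.closeEdgeFinset e) < #(L e) := by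
    intro e he
    obtain ⟨heG, hve⟩ := (G.mem_incidenceFinset v e).mp he
    obtain ⟨y, rfl⟩ := Sym2.mem_iff_exists.mp hve
    calc #(G.closeEdgeFinset s(v, y)) ≤ (G.degree v + G.degree y - 2) * 4 :=
          card_closeEdgeFinset_le hΔ heG
      _ < 22 := by have := hΔ y; omega
      _ ≤ #(L s(v, y)) := hL _ heG
  obtain ⟨c', hc'⟩ := (isPartialStrongLColoring_of_deleteIncidenceSet hc hcL).exists_union
    (edgeSet_subset_edgeSet.mpr (G.deleteIncidenceSet_le v)) (G.incidenceFinset v)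
    (by simpa using G.incidenceSet_subset v) hcloseL
  refine hG (hc'.stronglyLColorable fun e he => ?_)
  by_cases hve : v ∈ e
  · exact Or.inr ((G.mem_incidenceFinset v e).mpr ⟨he, hve⟩)
  · exact Or.inl (by rw [edgeSet_deleteIncidenceSet]; exact ⟨he, fun h => hve h.2⟩)
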